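/- arXiv:2007.00235 — 4 statements merged into one kernel-verified Lean document; each statement's English description precedes it below -/
import Mathlib

section
/- If x > 0, y > 0, u > 0, v > 0, θ > 0, θ ≠ 1, η > 0 satisfy the fixed point system x = η²(θ² + θ²x + y + θu + v)/(θ² + x + y + u + v), y = η²(θ² + x + θ²y + u + θv)/(θ² + x + y + u + v), u = η³(θ² + θx + y + θ²u + v)/(θ² + x + y + u + v), v = η³(θ² + x + θy + u + θ²v)/(θ² + x + y + u + v), then x = y if and only if u = v. -/
/-- At a positive fixed point of the map F (θ > 0, θ ≠ 1, η > 0),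
x = y if and only if u = v. -/
theorem fixed_point_xy_iff_uv (θ η x y u v : ℝ)
    (hθ : 0 < θ) (hθ1 : θ ≠ 1) (hη : 0 < η)
    (hx : 0 < x) (hy : 0 < y) (hu : 0 < u) (hv : 0 < v)
    (e1 : x = η^2 * (θ^2 + θ^2 * x + y + θ * u + v) / (θ^2 + x + y + u + v))
    (e2 : y = η^2 * (θ^2 + x + θ^2 * y + u + θ * v) / (θ^2 + x + y + u + v))
    (e3 : u = η^3 * (θ^2 + θ * x + y + θ^2 * u + v) / (θ^2 + x + y + u + v))
    (e4 : v = η^3 * (θ^2 + x + θ * y + u + θ^2 * v) / (θ^2 + x + y + u + v)) :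
    x = y ↔ u = v := by
  have hD : (0:ℝ) < θ^2 + x + y + u + v := by positivity
  have hDne : (θ^2 + x + y + u + v) ≠ 0 := ne_of_gt hD
  have hηne : η ≠ 0 := ne_of_gt hη
  have hθ1' : θ - 1 ≠ 0 := sub_ne_zero.mpr hθ1
  have E1 := (div_eq_iff hDne).mp e1.symm
  have E2 := (div_eq_iff hDne).mp e2.symm
  have E3 := (div_eq_iff hDne).mp e3.symm
  have E4 := (div_eq_iff hDne).mp e4.symm
  have E12 : (x - y) * (θ^2 + x + y + u + v)
      = η^2 * ((θ^2 - 1) * (x - y) + (θ - 1) * (u - v)) := by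
    linear_combination E2 - E1
  have E34 : (u - v) * (θ^2 + x + y + u + v)
      = η^3 * ((θ - 1) * (x - y) + (θ^2 - 1) * (u - v)) := by
    linear_combination E4 - E3
  constructor
  · intro h
    have h0 : x - y = 0 := sub_eq_zero.mpr h
    rw [h0] at E12
    have : η^2 * (θ - 1) * (u - v) = 0 := by linarith [E12]
    have huv : u - v = 0 := by
      rcases mul_eq_zero.mp this with h1 | h1
      · exact absurd h1 (by positivity)
      · exact h1
    exact sub_eq_zero.mp huv
  · intro h
    have h0 : u - v = 0 := sub_eq_zero.mpr h
    rw [h0] at E34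
    have : η^3 * (θ - 1) * (x - y) = 0 := by linarith [E34]
    have hxy : x - y = 0 := by
      rcases mul_eq_zero.mp this with h1 | h1
      · exact absurd h1 (by positivity)
      · exact h1
    exact sub_eq_zero.mp hxy
end

section
/- Every solution (x,y,u,v) in positive reals of the fixed point system for F with θ > 0, θ ≠ 1, η > 0 satisfies x = y and u = v; i.e., there is no positive solution with x ≠ y. -/
set_option maxHeartbeats 800000


/-- Every positive fixed point of F (θ > 0, θ ≠ 1, η > 0) satisfies x = y and u = v. -/
theorem no_solution_outside_M (θ η x y u v : ℝ)
    (hθ : 0 < θ) (hθ1 : θ ≠ 1) (hη : 0 < η)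
    (hx : 0 < x) (hy : 0 < y) (hu : 0 < u) (hv : 0 < v)
    (e1 : x = η^2 * (θ^2 + θ^2 * x + y + θ * u + v) / (θ^2 + x + y + u + v))
    (e2 : y = η^2 * (θ^2 + x + θ^2 * y + u + θ * v) / (θ^2 + x + y + u + v))
    (e3 : u = η^3 * (θ^2 + θ * x + y + θ^2 * u + v) / (θ^2 + x + y + u + v))
    (e4 : v = η^3 * (θ^2 + x + θ * y + u + θ^2 * v) / (θ^2 + x + y + u + v)) :
    x = y ∧ u = v := by
  have hD : (0:ℝ) < θ^2 + x + y + u + v := by positivity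
  rw [eq_div_iff hD.ne'] at e1 e2 e3 e4
  have E12 : ((θ^2+x+y+u+v) - η^2*(θ^2+1)) * (x+y) = η^2*(2*θ^2+(θ+1)*(u+v)) := by
    linear_combination e1 + e2
  have E34 : ((θ^2+x+y+u+v) - η^3*(θ^2+1)) * (u+v) = η^3*(2*θ^2+(θ+1)*(x+y)) := by
    linear_combination e3 + e4
  have hrw : 0 < η^2*(2*θ^2+(θ+1)*(u+v)) := by positivity
  have hrs : 0 < η^3*(2*θ^2+(θ+1)*(x+y)) := by positivity
  have hP : 0 < (θ^2+x+y+u+v) - η^2*(θ^2+1) := by nlinarith [add_pos hx hy]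
  have hQ : 0 < (θ^2+x+y+u+v) - η^3*(θ^2+1) := by nlinarith [add_pos hu hv]
  have A1 : ((θ^2+x+y+u+v) - η^2*(θ^2-1)) * (x - y) = η^2*(θ-1)*(u-v) := by
    linear_combination e1 - e2
  have A2 : ((θ^2+x+y+u+v) - η^3*(θ^2-1)) * (u - v) = η^3*(θ-1)*(x-y) := by
    linear_combination e3 - e4
  have hprod : ((θ^2+x+y+u+v) - η^2*(θ^2+1)) * ((θ^2+x+y+u+v) - η^3*(θ^2+1)) * ((x+y)*(u+v))
      = η^5 * ((2*θ^2+(θ+1)*(u+v)) * (2*θ^2+(θ+1)*(x+y))) := by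
    linear_combination (((θ^2+x+y+u+v) - η^3*(θ^2+1)) * (u+v)) * E12
      + (η^2*(2*θ^2+(θ+1)*(u+v))) * E34
  have hprod2 : (((θ^2+x+y+u+v) - η^2*(θ^2+1)) * ((θ^2+x+y+u+v) - η^3*(θ^2+1)) - η^5*(θ+1)^2) * ((x+y)*(u+v))
      = η^5*(4*θ^4 + 2*θ^2*(θ+1)*((x+y)+(u+v))) := by linear_combination hprod
  have hrhs : 0 < η^5*(4*θ^4 + 2*θ^2*(θ+1)*((x+y)+(u+v))) := by positivity
  have h0 : 0 < (((θ^2+x+y+u+v) - η^2*(θ^2+1)) * ((θ^2+x+y+u+v) - η^3*(θ^2+1)) - η^5*(θ+1)^2) * ((x+y)*(u+v)) := by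
    rw [hprod2]; exact hrhs
  have hPQ : η^5*(θ+1)^2 < ((θ^2+x+y+u+v) - η^2*(θ^2+1)) * ((θ^2+x+y+u+v) - η^3*(θ^2+1)) := by
    have hm : (0:ℝ) ≤ (x+y)*(u+v) := le_of_lt (mul_pos (add_pos hx hy) (add_pos hu hv))
    linarith [pos_of_mul_pos_left h0 hm]
  have hid : ((θ^2+x+y+u+v) - η^2*(θ^2-1)) * ((θ^2+x+y+u+v) - η^3*(θ^2-1))
      = ((θ^2+x+y+u+v) - η^2*(θ^2+1)) * ((θ^2+x+y+u+v) - η^3*(θ^2+1))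
        + 2*η^3*((θ^2+x+y+u+v) - η^2*(θ^2+1)) + 2*η^2*((θ^2+x+y+u+v) - η^3*(θ^2+1)) + 4*η^5 := by
    ring
  have hkey : η^5*(θ-1)^2 < ((θ^2+x+y+u+v) - η^2*(θ^2-1)) * ((θ^2+x+y+u+v) - η^3*(θ^2-1)) := by
    rw [hid]
    linarith [hPQ, mul_pos (pow_pos hη 3) hP, mul_pos (pow_pos hη 2) hQ,
      mul_pos (pow_pos hη 5) hθ, pow_pos hη 5]
  have hAB0 : (((θ^2+x+y+u+v) - η^2*(θ^2-1)) * ((θ^2+x+y+u+v) - η^3*(θ^2-1)) - η^5*(θ-1)^2) * (x-y) = 0 := by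
    linear_combination ((θ^2+x+y+u+v) - η^3*(θ^2-1)) * A1 + (η^2*(θ-1)) * A2
  have hxy : x = y := by
    rcases mul_eq_zero.mp hAB0 with h | h
    · exfalso; linarith [hkey]
    · linarith
  have hB : 0 < (θ^2+x+y+u+v) - η^3*(θ^2-1) := by linarith [hQ, pow_pos hη 3]
  have huv : u = v := by
    have : ((θ^2+x+y+u+v) - η^3*(θ^2-1)) * (u - v) = 0 := by rw [A2, hxy]; ring
    rcases mul_eq_zero.mp this with h | h
    · exact absurd h hB.ne'
    · linarith
  exact ⟨hxy, huv⟩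
end

section
/- If x ≠ y at a positive fixed point of F, then L = η²θ/(θ²+x+y+u+v) satisfies the quadratic equation (θ-1)²(θ+2)ηL² - (1+η)(θ²-1)L + θ = 0. -/
/-!
Subtracting the fixed-point equations pairwise gives a homogeneous linear system for
`(x - y, u - v)` whose coefficients are affine in `S = θ² + x + y + u + v`. Since `x - y ≠ 0`
the system has a nontrivial solution, so its determinant vanishes; that determinant, divided
by `S²` and multiplied by `θ`, is the quadratic in `L = η²θ / S`.
-/

theorem mul_eq_mul_of_nontrivial_solution {R : Type*} [CommRing R] [NoZeroDivisors R]
    {p q r s a b : R} (ha : a ≠ 0) (h₁ : p * a = q * b) (h₂ : r * b = s * a) :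
    p * r = q * s :=
  mul_right_cancel₀ ha (by linear_combination r * h₁ + q * h₂)

theorem fixed_point_determinant_eq_zero {θ η x y u v S : ℝ} (hS : S ≠ 0) (hxy : x ≠ y)
    (e1 : x = η^2 * (θ^2 + θ^2 * x + y + θ * u + v) / S)
    (e2 : y = η^2 * (θ^2 + x + θ^2 * y + u + θ * v) / S)
    (e3 : u = η^3 * (θ^2 + θ * x + y + θ^2 * u + v) / S)
    (e4 : v = η^3 * (θ^2 + x + θ * y + u + θ^2 * v) / S) :
    (S - η^2 * (θ^2 - 1)) * (S - η^3 * (θ^2 - 1)) = η^2 * (θ - 1) * (η^3 * (θ - 1)) := by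
  rw [eq_div_iff hS] at e1 e2 e3 e4
  refine mul_eq_mul_of_nontrivial_solution (sub_ne_zero.mpr hxy) (b := u - v) ?_ ?_
  · linear_combination e1 - e2
  · linear_combination e3 - e4

theorem quadratic_of_determinant_eq_zero {θ η S : ℝ} (hS : S ≠ 0)
    (hdet : (S - η^2 * (θ^2 - 1)) * (S - η^3 * (θ^2 - 1)) = η^2 * (θ - 1) * (η^3 * (θ - 1))) :
    (θ - 1)^2 * (θ + 2) * η * (η^2 * θ / S)^2 - (1 + η) * (θ^2 - 1) * (η^2 * θ / S) + θ = 0 := by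
  field_simp
  linear_combination θ * hdet

theorem L_quadratic_general (θ η x y u v : ℝ)
    (hx : 0 < x) (hy : 0 < y) (hu : 0 < u) (hv : 0 < v)
    (hxy : x ≠ y)
    (e1 : x = η^2 * (θ^2 + θ^2 * x + y + θ * u + v) / (θ^2 + x + y + u + v))
    (e2 : y = η^2 * (θ^2 + x + θ^2 * y + u + θ * v) / (θ^2 + x + y + u + v))
    (e3 : u = η^3 * (θ^2 + θ * x + y + θ^2 * u + v) / (θ^2 + x + y + u + v))
    (e4 : v = η^3 * (θ^2 + x + θ * y + u + θ^2 * v) / (θ^2 + x + y + u + v)) :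
    let L := η^2 * θ / (θ^2 + x + y + u + v)
    (θ - 1)^2 * (θ + 2) * η * L^2 - (1 + η) * (θ^2 - 1) * L + θ = 0 := by
  have hS : θ^2 + x + y + u + v ≠ 0 := by positivity
  exact quadratic_of_determinant_eq_zero hS (fixed_point_determinant_eq_zero hS hxy e1 e2 e3 e4)

/-- If x ≠ y at a positive fixed point of F, then L = η²θ/(θ²+x+y+u+v)
satisfies (θ-1)²(θ+2)ηL² - (1+η)(θ²-1)L + θ = 0. -/
theorem L_quadratic (θ η x y u v : ℝ)
    (hθ : 0 < θ) (hθ1 : θ ≠ 1) (hη : 0 < η)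
    (hx : 0 < x) (hy : 0 < y) (hu : 0 < u) (hv : 0 < v)
    (hxy : x ≠ y)
    (e1 : x = η^2 * (θ^2 + θ^2 * x + y + θ * u + v) / (θ^2 + x + y + u + v))
    (e2 : y = η^2 * (θ^2 + x + θ^2 * y + u + θ * v) / (θ^2 + x + y + u + v))
    (e3 : u = η^3 * (θ^2 + θ * x + y + θ^2 * u + v) / (θ^2 + x + y + u + v))
    (e4 : v = η^3 * (θ^2 + x + θ * y + u + θ^2 * v) / (θ^2 + x + y + u + v)) :
    let L := η^2 * θ / (θ^2 + x + y + u + v)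
    (θ - 1)^2 * (θ + 2) * η * L^2 - (1 + η) * (θ^2 - 1) * L + θ = 0 :=
  L_quadratic_general θ η x y u v hx hy hu hv hxy e1 e2 e3 e4
end

section
/- For any 5×5 stochastic matrix ℙ with strictly positive entries, there exists a unique probability vector π (π ≥ 0, entries summing to 1) with πℙ = π, and for every probability vector X, Xℙⁿ → π as n → ∞. -/
/-! Doeblin's argument. If every entry of the stochastic matrix `P` is at least `ε > 0`, then
`P - ε 𝟙` is nonnegative with row sums `1 - nε`, while `ε 𝟙` sends every vector to a constant one;
so `v ↦ P v` shrinks the oscillation `max v - min v` by the factor `1 - nε < 1`, and `min v` can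
only grow. Hence every column of `Pⁿ` converges to a constant, i.e. `Pⁿ` converges to a matrix
whose rows all equal some `π`. Passing to the limit in `Pⁿ⁺¹ = Pⁿ P` makes `π` stationary, and
`X Pⁿ → π` for every probability vector `X`, which for a stationary `X` forces `X = π`. -/

open Filter Topology Finset

namespace Matrix

variable {ι : Type*} [Fintype ι]

lemma mul_iInf_le_mulVec {Q : Matrix ι ι ℝ} {r : ℝ} (hQ : ∀ i j, 0 ≤ Q i j)
    (hrow : ∀ i, ∑ j, Q i j = r) (v : ι → ℝ) (i : ι) : r * ⨅ k, v k ≤ (Q *ᵥ v) i := by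
  rw [← hrow i, sum_mul]
  exact sum_le_sum fun k _ => mul_le_mul_of_nonneg_left (Finite.ciInf_le v k) (hQ i k)

lemma mulVec_le_mul_iSup {Q : Matrix ι ι ℝ} {r : ℝ} (hQ : ∀ i j, 0 ≤ Q i j)
    (hrow : ∀ i, ∑ j, Q i j = r) (v : ι → ℝ) (i : ι) : (Q *ᵥ v) i ≤ r * ⨆ k, v k := by
  rw [← hrow i, sum_mul]
  exact sum_le_sum fun k _ => mul_le_mul_of_nonneg_left (Finite.le_ciSup v k) (hQ i k)

lemma card_mul_le_one_of_le {P : Matrix ι ι ℝ} (hrow : ∀ i, ∑ j, P i j = 1) {ε : ℝ}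
    (hε : ∀ i j, ε ≤ P i j) (i : ι) : Fintype.card ι * ε ≤ 1 := by
  simpa [hrow i] using card_nsmul_le_sum univ (P i) ε fun j _ => hε i j

lemma iSup_sub_iInf_mulVec_le [Nonempty ι] {P : Matrix ι ι ℝ} (hrow : ∀ i, ∑ j, P i j = 1)
    {ε : ℝ} (hε : ∀ i j, ε ≤ P i j) (v : ι → ℝ) :
    (⨆ i, (P *ᵥ v) i) - ⨅ i, (P *ᵥ v) i ≤
      (1 - Fintype.card ι * ε) * ((⨆ i, v i) - ⨅ i, v i) := by
  set Q : Matrix ι ι ℝ := P - of fun _ _ => ε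
  have hQ : ∀ i j, 0 ≤ Q i j := fun i j => sub_nonneg.2 (hε i j)
  have hQrow : ∀ i, ∑ j, Q i j = 1 - Fintype.card ι * ε := fun i => by
    simp [Q, sum_sub_distrib, hrow]
  have hPQ : ∀ i, (P *ᵥ v) i = (Q *ᵥ v) i + ε * ∑ k, v k := fun i => by
    simp [Q, mulVec, dotProduct, mul_sum, sub_mul]
  have hsup : (⨆ i, (P *ᵥ v) i) ≤ (1 - Fintype.card ι * ε) * (⨆ i, v i) + ε * ∑ k, v k :=
    ciSup_le fun i => (hPQ i).trans_le (by gcongr; exact mulVec_le_mul_iSup hQ hQrow v i)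
  have hinf : (1 - Fintype.card ι * ε) * (⨅ i, v i) + ε * ∑ k, v k ≤ ⨅ i, (P *ᵥ v) i :=
    le_ciInf fun i => (hPQ i).symm ▸ (by gcongr; exact mul_iInf_le_mulVec hQ hQrow v i)
  linarith

lemma iSup_sub_iInf_pow_mulVec_le [Nonempty ι] [DecidableEq ι] {P : Matrix ι ι ℝ}
    (hrow : ∀ i, ∑ j, P i j = 1) {ε : ℝ} (hε : ∀ i j, ε ≤ P i j)
    (hε₁ : 0 ≤ 1 - Fintype.card ι * ε) (v : ι → ℝ) (n : ℕ) :
    (⨆ i, (P ^ n *ᵥ v) i) - ⨅ i, (P ^ n *ᵥ v) i ≤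
      (1 - Fintype.card ι * ε) ^ n * ((⨆ i, v i) - ⨅ i, v i) := by
  induction n with
  | zero => simp
  | succ n ih =>
    rw [pow_succ', ← mulVec_mulVec, pow_succ', mul_assoc]
    exact (iSup_sub_iInf_mulVec_le hrow hε _).trans (mul_le_mul_of_nonneg_left ih hε₁)

lemma exists_tendsto_pow_mulVec_const [Nonempty ι] [DecidableEq ι] {P : Matrix ι ι ℝ}
    (hpos : ∀ i j, 0 < P i j) (hrow : ∀ i, ∑ j, P i j = 1) (v : ι → ℝ) :
    ∃ c : ℝ, Tendsto (fun n => P ^ n *ᵥ v) atTop (𝓝 fun _ => c) := by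
  obtain ⟨⟨i₀, j₀⟩, hmin⟩ := Finite.exists_min (α := ι × ι) fun p => P p.1 p.2
  have hε : ∀ i j, P i₀ j₀ ≤ P i j := fun i j => hmin (i, j)
  have hrate₀ : 0 ≤ 1 - Fintype.card ι * P i₀ j₀ :=
    sub_nonneg.2 (card_mul_le_one_of_le hrow hε i₀)
  have hrate₁ : 1 - Fintype.card ι * P i₀ j₀ < 1 := by
    have := mul_pos (Nat.cast_pos.2 (Fintype.card_pos (α := ι))) (hpos i₀ j₀)
    linarith
  set a : ℕ → ℝ := fun n => ⨅ i, (P ^ n *ᵥ v) i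
  set b : ℕ → ℝ := fun n => ⨆ i, (P ^ n *ᵥ v) i
  have ha_le : ∀ n i, a n ≤ (P ^ n *ᵥ v) i := fun n => Finite.ciInf_le _
  have hle_b : ∀ n i, (P ^ n *ᵥ v) i ≤ b n := fun n => Finite.le_ciSup _
  have ha_mono : Monotone a := monotone_nat_of_le_succ fun n => le_ciInf fun i => by
    rw [pow_succ', ← mulVec_mulVec]
    simpa using mul_iInf_le_mulVec (fun i j => (hpos i j).le) hrow (P ^ n *ᵥ v) i
  have hb_anti : Antitone b := antitone_nat_of_succ_le fun n => ciSup_le fun i => by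
    rw [pow_succ', ← mulVec_mulVec]
    simpa using mulVec_le_mul_iSup (fun i j => (hpos i j).le) hrow (P ^ n *ᵥ v) i
  have hgap : Tendsto (fun n => b n - a n) atTop (𝓝 0) := by
    refine squeeze_zero (fun n => sub_nonneg.2 ((ha_le n i₀).trans (hle_b n i₀)))
      (iSup_sub_iInf_pow_mulVec_le hrow hε hrate₀ v) ?_
    simpa using
      (tendsto_pow_atTop_nhds_zero_of_lt_one hrate₀ hrate₁).mul_const ((⨆ i, v i) - ⨅ i, v i)
  have ha : Tendsto a atTop (𝓝 (⨆ n, a n)) := by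
    refine tendsto_atTop_ciSup ha_mono ⟨b 0, ?_⟩
    rintro _ ⟨n, rfl⟩
    exact (ha_le n i₀).trans ((hle_b n i₀).trans (hb_anti n.zero_le))
  refine ⟨⨆ n, a n, tendsto_pi_nhds.2 fun i => ?_⟩
  have hb : Tendsto b atTop (𝓝 (⨆ n, a n)) := by simpa using ha.add hgap
  exact tendsto_of_tendsto_of_tendsto_of_le_of_le ha hb (fun n => ha_le n i) (fun n => hle_b n i)

lemma exists_tendsto_pow_of_pos [Nonempty ι] [DecidableEq ι] {P : Matrix ι ι ℝ}
    (hpos : ∀ i j, 0 < P i j) (hrow : ∀ i, ∑ j, P i j = 1) :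
    ∃ π : ι → ℝ, Tendsto (fun n => P ^ n) atTop (𝓝 (of fun _ j => π j)) := by
  choose π hπ using fun j => exists_tendsto_pow_mulVec_const hpos hrow (Pi.single j 1)
  refine ⟨π, tendsto_pi_nhds.2 fun i => tendsto_pi_nhds.2 fun j => ?_⟩
  simpa [mulVec_single_one] using tendsto_pi_nhds.1 (hπ j) i

section LimitOfPowers

variable [DecidableEq ι] {P : Matrix ι ι ℝ} {π : ι → ℝ}
  (hlim : Tendsto (fun n => P ^ n) atTop (𝓝 (of fun _ j => π j)))
include hlim

lemma tendsto_vecMul_pow {X : ι → ℝ} (hX : ∑ i, X i = 1) :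
    Tendsto (fun n => X ᵥ* P ^ n) atTop (𝓝 π) := by
  have hXπ : X ᵥ* of (fun _ j => π j) = π := by
    ext j
    simp [vecMul, dotProduct, ← sum_mul, hX]
  rw [← hXπ]
  exact ((continuous_const.matrix_vecMul continuous_id).tendsto _).comp hlim

lemma vecMul_eq_of_tendsto_pow [Nonempty ι] : π ᵥ* P = π := by
  have hstep : Tendsto (fun n => P ^ n * P) atTop (𝓝 (of fun _ j => π j)) := by
    simpa only [Function.comp_def, ← pow_succ] using hlim.comp (tendsto_add_atTop_nat 1)
  have hfix := tendsto_nhds_unique (hlim.mul_const P) hstep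
  ext j
  simpa [mul_apply, vecMul, dotProduct] using congrFun₂ hfix (Classical.arbitrary ι) j

lemma sum_eq_one_of_tendsto_pow [Nonempty ι] (hP : P ∈ rowStochastic ℝ ι) : ∑ j, π j = 1 := by
  have hone : Tendsto (fun n => P ^ n *ᵥ 1) atTop (𝓝 (of (fun _ j => π j) *ᵥ 1)) :=
    ((continuous_id.matrix_mulVec continuous_const).tendsto _).comp hlim
  simp only [one_vecMul_of_mem_rowStochastic (pow_mem hP _), tendsto_const_nhds_iff] at hone
  simpa [mulVec, dotProduct] using (congrFun hone (Classical.arbitrary ι)).symm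

lemma nonneg_of_tendsto_pow [Nonempty ι] (hP : P ∈ rowStochastic ℝ ι) (j : ι) : 0 ≤ π j :=
  ge_of_tendsto' (tendsto_pi_nhds.1 (tendsto_pi_nhds.1 hlim (Classical.arbitrary ι)) j)
    fun n => nonneg_of_mem_rowStochastic (pow_mem hP n)

lemma eq_of_vecMul_eq_of_tendsto_pow {π' : ι → ℝ} (hstat : π' ᵥ* P = π') (hsum : ∑ i, π' i = 1) :
    π' = π := by
  have hpow : ∀ n, π' ᵥ* P ^ n = π' := fun n => by
    induction n with
    | zero => simp
    | succ n ih => rw [pow_succ, ← vecMul_vecMul, ih, hstat]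
  simpa [hpow] using tendsto_vecMul_pow hlim hsum

end LimitOfPowers

end Matrix

/-- Ergodic theorem for a 5×5 positive stochastic matrix: there is a unique
stationary probability vector π, and Xℙⁿ → π for every probability vector X. -/
theorem ergodic_positive_stochastic (P : Matrix (Fin 5) (Fin 5) ℝ)
    (hpos : ∀ i j, 0 < P i j) (hrow : ∀ i, ∑ j, P i j = 1) :
    ∃ π : Fin 5 → ℝ,
      ((∀ i, 0 ≤ π i) ∧ (∑ i, π i = 1) ∧ Matrix.vecMul π P = π) ∧
      (∀ π' : Fin 5 → ℝ,
        ((∀ i, 0 ≤ π' i) ∧ (∑ i, π' i = 1) ∧ Matrix.vecMul π' P = π') → π' = π) ∧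
      (∀ X : Fin 5 → ℝ, (∀ i, 0 ≤ X i) → (∑ i, X i = 1) →
        ∀ j, Tendsto (fun n => Matrix.vecMul X (P ^ n) j) atTop (𝓝 (π j))) := by
  obtain ⟨π, hlim⟩ := Matrix.exists_tendsto_pow_of_pos hpos hrow
  have hP : P ∈ Matrix.rowStochastic ℝ (Fin 5) :=
    Matrix.mem_rowStochastic_iff_sum.2 ⟨fun i j => (hpos i j).le, hrow⟩
  refine ⟨π, ⟨Matrix.nonneg_of_tendsto_pow hlim hP, Matrix.sum_eq_one_of_tendsto_pow hlim hP,
    Matrix.vecMul_eq_of_tendsto_pow hlim⟩, fun π' ⟨_, hsum, hstat⟩ => ?_, fun X _ hX => ?_⟩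
  · exact Matrix.eq_of_vecMul_eq_of_tendsto_pow hlim hstat hsum
  · exact tendsto_pi_nhds.1 (Matrix.tendsto_vecMul_pow hlim hX)
end
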